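/- Let n ≥ 1 and let M be a ℂ-linear endomorphism of H = ((Fin n → Bool) → ℂ). If M commutes with every bit-flip operator X_j ((X_j f)(x) = f(x with j-th bit flipped)) and with every sign operator Z_j ((Z_j f)(x) = (−1)^{x_j} f(x)), for all j, then M is a scalar multiple of the identity. -/

import Mathlib

/-- The bit-flip (Pauli `X`) operator on the `j`-th qubit,
`(X_j f)(x) = f(x with the j-th bit flipped)`. -/
noncomputable def XopL {n : ℕ} (j : Fin n) :
    ((Fin n → Bool) → ℂ) →ₗ[ℂ] ((Fin n → Bool) → ℂ) where
  toFun f := fun x => f (Function.update x j (!(x j)))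
  map_add' f f' := rfl
  map_smul' c f := rfl

/-- The sign (Pauli `Z`) operator on the `j`-th qubit, `(Z_j f)(x) = (−1)^{x_j}·f(x)`. -/
noncomputable def ZopL {n : ℕ} (j : Fin n) :
    ((Fin n → Bool) → ℂ) →ₗ[ℂ] ((Fin n → Bool) → ℂ) where
  toFun f := fun x => (-1 : ℂ) ^ (if x j then 1 else 0 : ℕ) * f x
  map_add' f f' := by funext x; simp [mul_add]
  map_smul' c f := by funext x; simp; try ring

/-!
`M` commutes with the multiplication operators `Z_j`, whose symbols separate points, so `M` is
itself a multiplication operator `f ↦ d * f`, and then `d = M 1`. Since the permutation operators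
`X_j` fix `1`, commuting with them makes `d` invariant under every bit flip, and the bit flips
connect all of `Fin n → Bool`, so `d` is constant.
-/

open Function

section Commutant

variable {K α : Type*} [CommRing K] [NoZeroDivisors K] [DecidableEq α]
  {ι : Type*} {g : ι → α → K} {M : (α → K) →ₗ[K] (α → K)}

theorem LinearMap.apply_single_eq_single_of_commute_mulLeft
    (hsep : ∀ x y, x ≠ y → ∃ i, g i x ≠ g i y)
    (hM : ∀ i, M ∘ₗ LinearMap.mulLeft K (g i) = LinearMap.mulLeft K (g i) ∘ₗ M) (x : α) :
    M (Pi.single x 1) = Pi.single x (M (Pi.single x 1) x) := by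
  funext y
  by_cases hyx : y = x
  · subst hyx; simp
  obtain ⟨i, hi⟩ := hsep x y (Ne.symm hyx)
  have hcomm := congr_fun (LinearMap.congr_fun (hM i) (Pi.single x 1)) y
  have hsingle : g i * Pi.single x 1 = g i x • Pi.single x 1 := by
    rw [← Pi.single_mul_right, ← Pi.single_smul, smul_eq_mul]
  simp only [LinearMap.comp_apply, LinearMap.mulLeft_apply, hsingle, map_smul, Pi.smul_apply,
    smul_eq_mul, Pi.mul_apply] at hcomm
  rw [Pi.single_eq_of_ne hyx]
  by_contra hne
  exact hi (mul_right_cancel₀ hne hcomm)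

theorem LinearMap.exists_eq_mulLeft_of_commute_mulLeft [Fintype α]
    (hsep : ∀ x y, x ≠ y → ∃ i, g i x ≠ g i y)
    (hM : ∀ i, M ∘ₗ LinearMap.mulLeft K (g i) = LinearMap.mulLeft K (g i) ∘ₗ M) :
    ∃ d : α → K, M = LinearMap.mulLeft K d := by
  refine ⟨fun x => M (Pi.single x 1) x, (Pi.basisFun K α).ext fun x => ?_⟩
  rw [Pi.basisFun_apply, apply_single_eq_single_of_commute_mulLeft hsep hM x,
    LinearMap.mulLeft_apply, ← Pi.single_mul_right, mul_one]

end Commutant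

theorem LinearMap.apply_one_comp_eq_of_commute_funLeft {K α : Type*} [Semiring K]
    {M : (α → K) →ₗ[K] (α → K)} {σ : α → α}
    (hM : M ∘ₗ LinearMap.funLeft K K σ = LinearMap.funLeft K K σ ∘ₗ M) :
    M 1 ∘ σ = M 1 :=
  (LinearMap.congr_fun hM 1).symm

theorem Function.eq_of_forall_update_invariant {ι γ : Type*} [Fintype ι] [DecidableEq ι]
    {β : ι → Type*} {d : (∀ i, β i) → γ} (h : ∀ x i b, d (update x i b) = d x)
    (x y : ∀ i, β i) : d x = d y := by
  suffices key : ∀ s : Finset ι, ∀ x, (∀ i ∉ s, x i = y i) → d x = d y from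
    key Finset.univ x (by simp)
  intro s
  induction s using Finset.induction_on with
  | empty => exact fun x hx => congrArg d (funext fun i => hx i (Finset.notMem_empty i))
  | insert a s _ ih =>
    intro x hx
    rw [← h x a (y a)]
    refine ih _ fun i hi => ?_
    by_cases hia : i = a
    · subst hia; simp
    · rw [update_of_ne hia]
      exact hx i (by simp [hia, hi])

theorem Function.update_invariant_of_flip_invariant {ι γ : Type*} [DecidableEq ι]
    {d : (ι → Bool) → γ} (h : ∀ x i, d (update x i (!x i)) = d x) (x : ι → Bool) (i : ι)
    (b : Bool) : d (update x i b) = d x := by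
  by_cases hb : b = x i
  · rw [hb, update_eq_self]
  · rw [Bool.eq_not_of_ne hb, h]

theorem ZopL_eq_mulLeft {n : ℕ} (j : Fin n) :
    ZopL j = LinearMap.mulLeft ℂ fun x => (-1 : ℂ) ^ (if x j then 1 else 0 : ℕ) :=
  rfl

theorem XopL_eq_funLeft {n : ℕ} (j : Fin n) :
    XopL j = LinearMap.funLeft ℂ ℂ fun x => update x j (!x j) :=
  rfl

theorem neg_one_pow_ite_injective :
    Injective fun b : Bool => (-1 : ℂ) ^ (if b then 1 else 0 : ℕ) := by
  intro a b h
  cases a <;> cases b <;> norm_num at h <;> rfl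

theorem commutant_of_pauli_is_scalar_general {n : ℕ}
    (M : ((Fin n → Bool) → ℂ) →ₗ[ℂ] ((Fin n → Bool) → ℂ))
    (hX : ∀ j : Fin n, M ∘ₗ XopL j = XopL j ∘ₗ M)
    (hZ : ∀ j : Fin n, M ∘ₗ ZopL j = ZopL j ∘ₗ M) :
    ∃ c : ℂ, M = c • LinearMap.id := by
  simp_rw [XopL_eq_funLeft] at hX
  simp_rw [ZopL_eq_mulLeft] at hZ
  have hsep : ∀ x y : Fin n → Bool, x ≠ y →
      ∃ j, (-1 : ℂ) ^ (if x j then 1 else 0 : ℕ) ≠ (-1 : ℂ) ^ (if y j then 1 else 0 : ℕ) := by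
    intro x y hxy
    obtain ⟨j, hj⟩ := ne_iff.mp hxy
    exact ⟨j, neg_one_pow_ite_injective.ne hj⟩
  obtain ⟨d, rfl⟩ := LinearMap.exists_eq_mulLeft_of_commute_mulLeft hsep hZ
  have hd : LinearMap.mulLeft ℂ d 1 = d := mul_one d
  have hflip : ∀ x j, d (update x j (!x j)) = d x := fun x j => by
    simpa only [hd, comp_apply] using
      congr_fun (LinearMap.apply_one_comp_eq_of_commute_funLeft (hX j)) x
  have hconst : ∀ x, d x = d fun _ => false :=
    fun x => eq_of_forall_update_invariant (update_invariant_of_flip_invariant hflip) x _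
  refine ⟨d fun _ => false, LinearMap.ext fun f => funext fun x => ?_⟩
  simp [hconst x]

/-- A linear endomorphism of `(Fin n → Bool) → ℂ` commuting with every
bit-flip operator `X_j` and every sign operator `Z_j` is a scalar multiple of the
identity. -/
theorem commutant_of_pauli_is_scalar {n : ℕ} (hn : 1 ≤ n)
    (M : ((Fin n → Bool) → ℂ) →ₗ[ℂ] ((Fin n → Bool) → ℂ))
    (hX : ∀ j : Fin n, M ∘ₗ XopL j = XopL j ∘ₗ M)
    (hZ : ∀ j : Fin n, M ∘ₗ ZopL j = ZopL j ∘ₗ M) :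
    ∃ c : ℂ, M = c • LinearMap.id :=
  commutant_of_pauli_is_scalar_general M hX hZ
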